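/- Let p ≥ 1, let Σ : ℝ^p → PD_p(ℝ) assign to each point a real positive definite p×p matrix, and let a > 0. Define C(x,y) = π^{-p/2} det((Σ_x+Σ_y)/2)^{-1/2} ∫_0^∞ (1/(a√π)) exp(−t²/(4a²)) exp(−Q_xy(x−y)/t²) dt. Then C(x,x) > 0 for every x, and for all x, y ∈ ℝ^p the normalized kernel is the non-stationary exponential correlation: C(x,y) / ( √(C(x,x)) · √(C(y,y)) ) = φ_xy exp( −√(Q_xy(x−y)) / a ). -/

import Mathlib

/-!
The mixing integral is Glasser's integral
`∫₀^∞ exp (-α t² - β / t²) dt = ½ √(π/α) exp (-2 √(αβ))`: the substitution `t ↦ √β / (√α t)`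
preserves the integrand, so twice the integral is `∫₀^∞ (1 + √β / (√α t²)) exp (-α t² - β / t²) dt`,
which the substitution `u = √α t - √β / t` turns into a Gaussian integral. Hence
`C x y = π^(-p/2) det(M)^(-1/2) exp (-√Q / a)` with `M = (Σ_x + Σ_y) / 2`; on the diagonal `Q = 0`
and `M = Σ_x`, and normalizing leaves exactly the factor `φ_xy`.
-/

open MeasureTheory Matrix Real

/-- `Q_xy(h) = hᵀ ((Σx+Σy)/2)⁻¹ h`. -/
noncomputable def Qform {p : ℕ} (A B : Matrix (Fin p) (Fin p) ℝ) (h : Fin p → ℝ) : ℝ :=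
  h ⬝ᵥ ((((2:ℝ)⁻¹ • (A + B))⁻¹).mulVec h)

/-- `φ_xy = det(Σx)^{1/4} det(Σy)^{1/4} det((Σx+Σy)/2)^{-1/2}`. -/
noncomputable def phiFactor {p : ℕ} (A B : Matrix (Fin p) (Fin p) ℝ) : ℝ :=
  A.det ^ ((1:ℝ) / 4) * B.det ^ ((1:ℝ) / 4) * ((2:ℝ)⁻¹ • (A + B)).det ^ (-(1:ℝ) / 2)

open Set

section Substitution

variable {E : Type*} [NormedAddCommGroup E] [NormedSpace ℝ E] {a b c : ℝ}

lemma image_div_Ioi (hc : 0 < c) : (fun t => c / t) '' Ioi 0 = Ioi 0 :=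
  Set.ext fun u => ⟨by rintro ⟨t, ht, rfl⟩; exact div_pos hc ht,
    fun hu => ⟨c / u, div_pos hc hu, div_div_cancel₀ hc.ne'⟩⟩

lemma injOn_div_Ioi (hc : 0 < c) : InjOn (fun t => c / t) (Ioi 0) := fun x _ y _ hxy => by
  simpa [div_eq_mul_inv, hc.ne'] using hxy

lemma hasDerivAt_const_div (c : ℝ) {t : ℝ} (ht : t ≠ 0) :
    HasDerivAt (fun t => c / t) (-(c / t ^ 2)) t := by
  simpa [div_eq_mul_inv, neg_div] using (hasDerivAt_inv ht).const_mul c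

lemma integral_Ioi_comp_div (g : ℝ → E) (hc : 0 < c) :
    ∫ t in Ioi 0, (c / t ^ 2) • g (c / t) = ∫ t in Ioi 0, g t := by
  have := integral_image_eq_integral_abs_deriv_smul measurableSet_Ioi
    (fun t ht => (hasDerivAt_const_div c (ne_of_gt ht)).hasDerivWithinAt) (injOn_div_Ioi hc) g
  rw [image_div_Ioi hc] at this
  rw [this]
  refine setIntegral_congr_fun measurableSet_Ioi fun t ht => ?_
  have : 0 < c / t ^ 2 := div_pos hc (pow_pos ht 2)
  rw [abs_neg, abs_of_pos this]

lemma integrableOn_Ioi_comp_div_iff (g : ℝ → E) (hc : 0 < c) :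
    IntegrableOn (fun t => (c / t ^ 2) • g (c / t)) (Ioi 0) ↔ IntegrableOn g (Ioi 0) := by
  have := integrableOn_image_iff_integrableOn_abs_deriv_smul measurableSet_Ioi
    (fun t ht => (hasDerivAt_const_div c (ne_of_gt ht)).hasDerivWithinAt) (injOn_div_Ioi hc) g
  rw [image_div_Ioi hc] at this
  rw [this]
  refine integrableOn_congr_fun (fun t ht => ?_) measurableSet_Ioi
  have : 0 < c / t ^ 2 := div_pos hc (pow_pos ht 2)
  rw [abs_neg, abs_of_pos this]

lemma integral_Ioi_comp_mul_sub_div (g : ℝ → E) (ha : 0 < a) (hb : 0 < b) :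
    ∫ t in Ioi 0, (a + b / t ^ 2) • g (a * t - b / t) = ∫ u, g u := by
  have hderiv : ∀ t ∈ Ioi (0 : ℝ),
      HasDerivWithinAt (fun t => a * t - b / t) (a + b / t ^ 2) (Ioi 0) t := fun t ht => by
    simpa using (((hasDerivAt_id t).const_mul a).fun_sub
      (hasDerivAt_const_div b (ne_of_gt ht))).hasDerivWithinAt
  have hmono : StrictMonoOn (fun t => a * t - b / t) (Ioi 0) := fun x hx y hy hxy => by
    have := div_lt_div_of_pos_left hb hx hxy
    dsimp only
    nlinarith
  have himage : (fun t => a * t - b / t) '' Ioi 0 = univ := by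
    refine eq_univ_of_forall fun u => ?_
    -- the positive root of `a t ^ 2 - u t - b`
    set D := √(u ^ 2 + 4 * a * b)
    have hD : D ^ 2 = u ^ 2 + 4 * a * b := sq_sqrt (by positivity)
    have hDu : |u| < D := abs_lt_of_sq_lt_sq (by nlinarith) (sqrt_nonneg _)
    have hpos : 0 < u + D := by linarith [neg_abs_le u]
    refine ⟨(u + D) / (2 * a), div_pos hpos (by positivity), ?_⟩
    field_simp
    nlinarith
  have := integral_image_eq_integral_abs_deriv_smul measurableSet_Ioi hderiv hmono.injOn g
  rw [himage, Measure.restrict_univ] at this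
  rw [this]
  refine setIntegral_congr_fun measurableSet_Ioi fun t ht => ?_
  have : 0 < a + b / t ^ 2 := by have : (0:ℝ) < t := ht; positivity
  rw [abs_of_pos this]

lemma two_mul_integral_Ioi_of_comp_div_eq {f : ℝ → ℝ} (hc : 0 < c) (hf : IntegrableOn f (Ioi 0))
    (hsymm : ∀ t ∈ Ioi (0 : ℝ), f (c / t) = f t) :
    2 * ∫ t in Ioi 0, f t = ∫ t in Ioi 0, (1 + c / t ^ 2) * f t := by
  have hcongr : EqOn (fun t => (c / t ^ 2) • f (c / t)) (fun t => c / t ^ 2 * f t) (Ioi 0) :=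
    fun t ht => by simp only [smul_eq_mul, hsymm t ht]
  have hint : IntegrableOn (fun t => c / t ^ 2 * f t) (Ioi 0) :=
    (integrableOn_congr_fun hcongr measurableSet_Ioi).mp
      ((integrableOn_Ioi_comp_div_iff f hc).mpr hf)
  have hmoment : ∫ t in Ioi 0, c / t ^ 2 * f t = ∫ t in Ioi 0, f t := by
    rw [← setIntegral_congr_fun measurableSet_Ioi hcongr, integral_Ioi_comp_div f hc]
  simp only [add_mul, one_mul]
  rw [integral_add hf hint, hmoment, two_mul]

end Substitution

lemma integral_exp_neg_mul_sq_sub_div_sq {α β : ℝ} (hα : 0 < α) (hβ : 0 ≤ β) :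
    ∫ t in Ioi 0, exp (-(α * t ^ 2) - β / t ^ 2) = √(π / α) / 2 * exp (-2 * √(α * β)) := by
  rcases hβ.eq_or_lt with rfl | hβ
  · simpa [neg_mul] using integral_gaussian_Ioi α
  obtain ⟨a, ha, rfl⟩ : ∃ a, 0 < a ∧ a ^ 2 = α := ⟨√α, sqrt_pos.2 hα, sq_sqrt hα.le⟩
  obtain ⟨b, hb, rfl⟩ : ∃ b, 0 < b ∧ b ^ 2 = β := ⟨√β, sqrt_pos.2 hβ, sq_sqrt hβ.le⟩
  set f : ℝ → ℝ := fun t => exp (-(a ^ 2 * t ^ 2) - b ^ 2 / t ^ 2)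
  have hf : IntegrableOn f (Ioi 0) := by
    refine (integrable_exp_neg_mul_sq hα).integrableOn.mono' (by fun_prop)
      (ae_of_all _ fun t => ?_)
    rw [norm_of_nonneg (exp_pos _).le, exp_le_exp, neg_mul]
    linarith [div_nonneg hβ.le (sq_nonneg t)]
  -- `t ↦ b / (a t)` exchanges the two terms of the exponent
  have hsymm : ∀ t ∈ Ioi (0 : ℝ), f (b / a / t) = f t := fun t ht => by
    have : (t : ℝ) ≠ 0 := ne_of_gt ht
    simp only [f]
    congr 1
    field_simp
    ring
  have hsquare : ∀ t ∈ Ioi (0 : ℝ), (1 + b / a / t ^ 2) * f t =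
      a⁻¹ * exp (-2 * (a * b)) * ((a + b / t ^ 2) • exp (-(a * t - b / t) ^ 2)) := fun t ht => by
    have : (t : ℝ) ≠ 0 := ne_of_gt ht
    simp only [f, smul_eq_mul]
    rw [mul_left_comm, mul_assoc, ← exp_add]
    field_simp
    ring_nf
  have key : 2 * ∫ t in Ioi 0, f t = a⁻¹ * exp (-2 * (a * b)) * √π := by
    have hgauss : ∫ u, exp (-u ^ 2) = √π := by simpa using integral_gaussian 1
    rw [two_mul_integral_Ioi_of_comp_div_eq (div_pos hb ha) hf hsymm,
      setIntegral_congr_fun measurableSet_Ioi hsquare, integral_const_mul,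
      integral_Ioi_comp_mul_sub_div (fun u => exp (-u ^ 2)) ha hb, hgauss]
  rw [← mul_pow, sqrt_sq (by positivity), sqrt_div pi_pos.le, sqrt_sq ha.le]
  linear_combination key / 2

lemma integral_gaussian_mixture_exp_neg_div_sq {a b : ℝ} (ha : 0 < a) (hb : 0 ≤ b) :
    ∫ t in Ioi 0, 1 / (a * √π) * exp (-t ^ 2 / (4 * a ^ 2)) * exp (-b / t ^ 2) =
      exp (-√b / a) := by
  have hintegrand : ∀ t : ℝ, 1 / (a * √π) * exp (-t ^ 2 / (4 * a ^ 2)) * exp (-b / t ^ 2) =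
      1 / (a * √π) * exp (-((2 * a)⁻¹ ^ 2 * t ^ 2) - b / t ^ 2) := fun t => by
    rw [mul_assoc, ← exp_add]
    ring_nf
  simp_rw [hintegrand]
  rw [integral_const_mul, integral_exp_neg_mul_sq_sub_div_sq (by positivity) hb,
    sqrt_div pi_pos.le, sqrt_mul (by positivity), sqrt_sq (by positivity)]
  have : √π ≠ 0 := (sqrt_pos.2 pi_pos).ne'
  field_simp

lemma Qform_nonneg {p : ℕ} {A B : Matrix (Fin p) (Fin p) ℝ} (hA : A.PosDef) (hB : B.PosDef)
    (h : Fin p → ℝ) : 0 ≤ Qform A B h :=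
  ((hA.add hB).smul (by norm_num : (0 : ℝ) < 2⁻¹)).inv.posSemidef.dotProduct_mulVec_nonneg h

lemma sqrt_mul_rpow_neg_half {k d : ℝ} (hd : 0 ≤ d) :
    √(k * d ^ (-(1 : ℝ) / 2)) = √k / d ^ ((1 : ℝ) / 4) := by
  rw [sqrt_mul' _ (by positivity), sqrt_eq_rpow (d ^ _), ← rpow_mul hd, div_eq_mul_inv _ (d ^ _),
    ← rpow_neg hd]
  norm_num

theorem normalized_exponential_nonstationary_general (p : ℕ)
    (S : (Fin p → ℝ) → Matrix (Fin p) (Fin p) ℝ) (hS : ∀ x, (S x).PosDef)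
    (a : ℝ) (ha : 0 < a)
    (C : (Fin p → ℝ) → (Fin p → ℝ) → ℝ)
    (hC : ∀ x y, C x y = Real.pi ^ (-(p : ℝ) / 2) *
      ((2:ℝ)⁻¹ • (S x + S y)).det ^ (-(1:ℝ) / 2) *
      ∫ t in Set.Ioi (0:ℝ),
        (1 / (a * Real.sqrt Real.pi)) * Real.exp (-t ^ 2 / (4 * a ^ 2)) *
          Real.exp (-(Qform (S x) (S y) (x - y)) / t ^ 2)) :
    (∀ x : Fin p → ℝ, 0 < C x x) ∧
    ∀ x y : Fin p → ℝ,
      C x y / (Real.sqrt (C x x) * Real.sqrt (C y y)) =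
        phiFactor (S x) (S y) *
          Real.exp (-Real.sqrt (Qform (S x) (S y) (x - y)) / a) := by
  have hC' : ∀ x y, C x y = π ^ (-(p : ℝ) / 2) * ((2:ℝ)⁻¹ • (S x + S y)).det ^ (-(1:ℝ) / 2) *
      exp (-√(Qform (S x) (S y) (x - y)) / a) := fun x y => by
    rw [hC, integral_gaussian_mixture_exp_neg_div_sq ha (Qform_nonneg (hS x) (hS y) _)]
  have hCdiag : ∀ x, C x x = π ^ (-(p : ℝ) / 2) * (S x).det ^ (-(1:ℝ) / 2) := fun x => by
    simp [hC', Qform, ← two_smul ℝ (S x)]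
  have hπ : 0 < π ^ (-(p : ℝ) / 2) := rpow_pos_of_pos pi_pos _
  have hdet x : 0 < (S x).det := (hS x).det_pos
  refine ⟨fun x => by rw [hCdiag]; have := hdet x; positivity, fun x y => ?_⟩
  rw [hC', hCdiag, hCdiag, sqrt_mul_rpow_neg_half (hdet x).le, sqrt_mul_rpow_neg_half (hdet y).le,
    phiFactor]
  generalize π ^ (-(p : ℝ) / 2) = k at hπ ⊢
  have := hdet x
  have := hdet y
  field_simp
  rw [sq_sqrt hπ.le, mul_comm]

/-- normalizing the Gaussian scale mixture yields the non-stationary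
exponential correlation `φ_xy exp(−√(Q_xy(x−y))/a)`. -/
theorem normalized_exponential_nonstationary (p : ℕ) (hp : 1 ≤ p)
    (S : (Fin p → ℝ) → Matrix (Fin p) (Fin p) ℝ) (hS : ∀ x, (S x).PosDef)
    (a : ℝ) (ha : 0 < a)
    (C : (Fin p → ℝ) → (Fin p → ℝ) → ℝ)
    (hC : ∀ x y, C x y = Real.pi ^ (-(p : ℝ) / 2) *
      ((2:ℝ)⁻¹ • (S x + S y)).det ^ (-(1:ℝ) / 2) *
      ∫ t in Set.Ioi (0:ℝ),
        (1 / (a * Real.sqrt Real.pi)) * Real.exp (-t ^ 2 / (4 * a ^ 2)) *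
          Real.exp (-(Qform (S x) (S y) (x - y)) / t ^ 2)) :
    (∀ x : Fin p → ℝ, 0 < C x x) ∧
    ∀ x y : Fin p → ℝ,
      C x y / (Real.sqrt (C x x) * Real.sqrt (C y y)) =
        phiFactor (S x) (S y) *
          Real.exp (-Real.sqrt (Qform (S x) (S y) (x - y)) / a) :=
  normalized_exponential_nonstationary_general p S hS a ha C hC
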